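/- arXiv:2012.03006 — 12 statements merged into one kernel-verified Lean document; each statement's English description precedes it below -/
import Mathlib

section
/- The restriction relation is antisymmetric: if a ≤ b and b ≤ a then a = b. -/
/-- The restriction relation: `a ≤ b` iff there exist `y, z ∈ Z` with
`yb = ya = a = az = bz`. -/
def restr {S : Type*} [Semigroup S] (Z : Set S) (a b : S) : Prop :=
  ∃ y ∈ Z, ∃ z ∈ Z, y * b = a ∧ y * a = a ∧ a * z = a ∧ b * z = a

/-- The restriction relation is antisymmetric. -/
theorem restr_antisymm {S : Type*} [Semigroup S] (Z : Set S)
    (hZ : ∀ y ∈ Z, ∀ z ∈ Z, y * z ∈ Z)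
    (a b : S) (hab : restr Z a b) (hba : restr Z b a) : a = b := by
  obtain ⟨y, -, z, -, h1, h2, h3, h4⟩ := hab
  obtain ⟨u, -, v, -, g1, g2, g3, g4⟩ := hba
  calc a = y * b := h1.symm
    _ = y * (b * v) := by rw [g3]
    _ = (y * b) * v := (mul_assoc ..).symm
    _ = a * v := by rw [h1]
    _ = b := g4
end

section
/- If Z ⊆ Z^N (every element of Z normalises Z, i.e. zZ = Zz for z ∈ Z), then any restriction of a normaliser of Z is again a normaliser of Z: if a ≤ b and bZ = Zb then aZ = Za. -/
/-- From `cZ = Zc` and `w ∈ Z`, get `w'` with `c * w = w' * c`. -/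
lemma comm_right {S : Type*} [Semigroup S] {Z : Set S} {c : S}
    (h : (fun w => c * w) '' Z = (fun w => w * c) '' Z) {w : S} (hw : w ∈ Z) :
    ∃ w' ∈ Z, c * w = w' * c := by
  have : c * w ∈ (fun w => w * c) '' Z := by
    rw [← h]; exact ⟨w, hw, rfl⟩
  obtain ⟨w', hw', he⟩ := this
  exact ⟨w', hw', he.symm⟩

/-- From `cZ = Zc` and `w ∈ Z`, get `w'` with `w * c = c * w'`. -/
lemma comm_left {S : Type*} [Semigroup S] {Z : Set S} {c : S}
    (h : (fun w => c * w) '' Z = (fun w => w * c) '' Z) {w : S} (hw : w ∈ Z) :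
    ∃ w' ∈ Z, w * c = c * w' := by
  have : w * c ∈ (fun w => c * w) '' Z := by
    rw [h]; exact ⟨w, hw, rfl⟩
  obtain ⟨w', hw', he⟩ := this
  exact ⟨w', hw', he.symm⟩

/-- If `Z ⊆ Z^N` then restrictions of normalisers of `Z` are again
normalisers of `Z`. -/
theorem restr_of_normaliser {S : Type*} [Semigroup S] (Z : Set S)
    (hZ : ∀ y ∈ Z, ∀ z ∈ Z, y * z ∈ Z)
    (hZN : ∀ z ∈ Z, (fun w => z * w) '' Z = (fun w => w * z) '' Z)
    (a b : S) (hab : restr Z a b)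
    (hb : (fun w => b * w) '' Z = (fun w => w * b) '' Z) :
    (fun w => a * w) '' Z = (fun w => w * a) '' Z := by
  obtain ⟨y, hy, z, hz, hyb, hya, haz, hbz⟩ := hab
  ext x
  constructor
  · rintro ⟨w, hw, rfl⟩
    -- a*w = a*z*w = a*w1*z = y*b*w1*z = y*w2*b*z = (y*w2)*a
    obtain ⟨w1, hw1, hzw⟩ := comm_right (hZN z hz) hw
    obtain ⟨w2, hw2, hbw1⟩ := comm_right hb hw1
    refine ⟨y * w2, hZ y hy w2 hw2, ?_⟩
    show (y * w2) * a = a * w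
    calc (y * w2) * a = y * (w2 * (b * z)) := by rw [← hbz]; simp [mul_assoc]
      _ = y * ((w2 * b) * z) := by rw [mul_assoc]
      _ = y * ((b * w1) * z) := by rw [hbw1]
      _ = (y * b) * (w1 * z) := by simp [mul_assoc]
      _ = a * (z * w) := by rw [hyb, hzw]
      _ = (a * z) * w := by rw [mul_assoc]
      _ = a * w := by rw [haz]
  · rintro ⟨w, hw, rfl⟩
    -- w*a = w*y*a = y*w1*a = y*w1*b*z = y*b*w2*z = a*(w2*z)
    obtain ⟨w1, hw1, hwy⟩ := comm_left (hZN y hy) hw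
    obtain ⟨w2, hw2, hw1b⟩ := comm_left hb hw1
    refine ⟨w2 * z, hZ w2 hw2 z hz, ?_⟩
    show a * (w2 * z) = w * a
    calc a * (w2 * z) = (y * b) * (w2 * z) := by rw [hyb]
      _ = y * ((b * w2) * z) := by simp [mul_assoc]
      _ = y * ((w1 * b) * z) := by rw [← hw1b]
      _ = (y * w1) * (b * z) := by simp [mul_assoc]
      _ = (w * y) * a := by rw [← hwy, hbz]
      _ = w * (y * a) := by rw [mul_assoc]
      _ = w * a := by rw [hya]
end

section
/- If Z is commutative and up-directed with respect to the restriction relation ≤ (every two elements of Z have a common upper bound in Z), then every element of Z is idempotent. -/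
/-- If `Z` is commutative and up-directed w.r.t. restriction then every
element of `Z` is idempotent. -/
theorem Z_idem_of_upDirected {S : Type*} [Semigroup S] (Z : Set S)
    (hZ : ∀ y ∈ Z, ∀ z ∈ Z, y * z ∈ Z)
    (hcomm : ∀ y ∈ Z, ∀ z ∈ Z, y * z = z * y)
    (hdir : ∀ x ∈ Z, ∀ y ∈ Z, ∃ z ∈ Z, restr Z x z ∧ restr Z y z) :
    ∀ x ∈ Z, x * x = x := by
  intro x hx
  obtain ⟨z, hz, hxz, -⟩ := hdir x hx x hx
  obtain ⟨y, hy, w, hw, hyz, hyx, hxw, hzw⟩ := hxz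
  -- get a common upper bound `s` of `x` and `y`
  obtain ⟨s, hs, hxs, hys⟩ := hdir x hx y hy
  obtain ⟨y1, hy1, w1, hw1, h1, h2, h3, h4⟩ := hxs
  obtain ⟨y2, hy2, w2, hw2, k1, k2, k3, k4⟩ := hys
  -- symmetrized witnesses
  set c := y1 * w1 with hc
  set d := y2 * w2 with hd
  have hcx : c * x = x := by
    rw [hc, mul_assoc, hcomm w1 hw1 x hx, h3, h2]
  have hcs : c * s = x := by
    rw [hc, mul_assoc, hcomm w1 hw1 s hs, h4, h2]
  have hds : d * s = y := by
    rw [hd, mul_assoc, hcomm w2 hw2 s hs, k4, k2]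
  have hdy : d * y = y := by
    rw [hd, mul_assoc, hcomm w2 hw2 y hy, k3, k2]
  have hcZ : c ∈ Z := hZ y1 hy1 w1 hw1
  have hdZ : d ∈ Z := hZ y2 hy2 w2 hw2
  -- x = d * x
  have hdx : d * x = x := by
    calc d * x = d * (y * x) := by rw [hyx]
    _ = (d * y) * x := (mul_assoc d y x).symm
    _ = y * x := by rw [hdy]
    _ = x := hyx
  -- x = c * y
  have hxcy : x = c * y := by
    calc x = d * x := hdx.symm
    _ = d * (c * s) := by rw [hcs]
    _ = (d * c) * s := (mul_assoc d c s).symm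
    _ = (c * d) * s := by rw [hcomm d hdZ c hcZ]
    _ = c * (d * s) := mul_assoc c d s
    _ = c * y := by rw [hds]
  calc x * x = (c * y) * x := by rw [← hxcy]
  _ = c * (y * x) := mul_assoc c y x
  _ = c * x := by rw [hyx]
  _ = x := hcx
end

section
/- Domination is transitive in the following strong sense: if a <_s b for some s (meaning as, sa ∈ D, bs, sb ∈ Z, and bsa = a = asb) and b <_t c, then a <_t c. -/
/-- The witnessed domination relation `a <_s b`: `as, sa ∈ D`, `bs, sb ∈ Z`,
and `bsa = a = asb`. -/
def domW {S : Type*} [Semigroup S] (Z D : Set S) (a s b : S) : Prop :=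
  a * s ∈ D ∧ s * a ∈ D ∧ b * s ∈ Z ∧ s * b ∈ Z ∧ b * (s * a) = a ∧ a * (s * b) = a

/-- Strong transitivity of domination: `a <_s b` and `b <_t c` imply `a <_t c`. -/
theorem dom_trans {S : Type*} [Semigroup S] (Z D : Set S)
    (hZ : ∀ y ∈ Z, ∀ z ∈ Z, y * z ∈ Z)
    (hD : ∀ d ∈ D, ∀ e ∈ D, d * e ∈ D)
    (hZD : Z ⊆ D)
    (a b c s t : S) (hab : domW Z D a s b) (hbc : domW Z D b t c) :
    domW Z D a t c := by
  obtain ⟨has, hsa, hbs, hsb, hbsa, hasb⟩ := hab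
  obtain ⟨hbt, htb, hct, htc, hctb, hbtc⟩ := hbc
  refine ⟨?_, ?_, hct, htc, ?_, ?_⟩
  · have : a * t = (a * s) * (b * t) := by
      conv_lhs => rw [← hasb]
      simp [mul_assoc]
    rw [this]; exact hD _ has _ hbt
  · have : t * a = (t * b) * (s * a) := by
      conv_lhs => rw [← hbsa]
      simp [mul_assoc]
    rw [this]; exact hD _ htb _ hsa
  · have : c * (t * a) = (c * (t * b)) * (s * a) := by
      conv_lhs => rw [← hbsa]
      simp [mul_assoc]
    rw [this, hctb, hbsa]
  · have : a * (t * c) = (a * s) * (b * (t * c)) := by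
      conv_lhs => rw [← hasb]
      simp [mul_assoc]
    rw [this, hbtc, mul_assoc, hasb]
end

section
/- If Z is commutative, then domination is right-auxiliary to restriction: if a < b and b ≤ c then a < c. -/
/-- If `Z` is commutative then domination is right-auxiliary to restriction:
`a < b ≤ c` implies `a < c`. -/
theorem dom_right_auxiliary {S : Type*} [Semigroup S] (Z D : Set S)
    (hZ : ∀ y ∈ Z, ∀ z ∈ Z, y * z ∈ Z)
    (hD : ∀ d ∈ D, ∀ e ∈ D, d * e ∈ D)
    (hZD : Z ⊆ D)
    (hcomm : ∀ y ∈ Z, ∀ z ∈ Z, y * z = z * y)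
    (a b c : S) (hab : ∃ s, domW Z D a s b) (hbc : restr Z b c) :
    ∃ t, domW Z D a t c := by
  obtain ⟨s, hasD, hsaD, hbsZ, hsbZ, hbsa, hasb⟩ := hab
  obtain ⟨y, hyZ, z, hzZ, hyc, hyb, hbz, hcz⟩ := hbc
  have hya : y * a = a := by
    conv_lhs => rw [← hbsa, ← mul_assoc, hyb]
    exact hbsa
  have haz : a * z = a := by
    conv_lhs => rw [← hasb, mul_assoc, mul_assoc, hbz]
    exact hasb
  refine ⟨z * (s * y), ?_, ?_, ?_, ?_, ?_, ?_⟩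
  · have h : a * (z * (s * y)) = (a * s) * y := by
      rw [← mul_assoc, haz, ← mul_assoc]
    rw [h]
    exact hD _ hasD _ (hZD hyZ)
  · have h : (z * (s * y)) * a = z * (s * a) := by
      simp only [mul_assoc]; rw [hya]
    rw [h]
    exact hD _ (hZD hzZ) _ hsaD
  · have h : c * (z * (s * y)) = (b * s) * y := by
      rw [← mul_assoc, hcz, ← mul_assoc]
    rw [h]
    exact hZ _ hbsZ _ hyZ
  · have h : (z * (s * y)) * c = z * (s * b) := by
      simp only [mul_assoc]; rw [hyc]
    rw [h]
    exact hZ _ hzZ _ hsbZ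
  · simp only [mul_assoc]
    rw [hya, ← mul_assoc c z, hcz, hbsa]
  · simp only [mul_assoc]
    rw [hyc, ← mul_assoc a z, haz, hasb]
end

section
/- Domination is antisymmetric on idempotents: if d, e ∈ E(S) with d < e and e < d then d = e. Moreover, if a <_e e with e idempotent, then ea = a = ae. -/
/-- Domination is antisymmetric on idempotents and `a <_e e` with `e`
idempotent implies `ea = a = ae`. -/
theorem dom_antisymm_on_idempotents {S : Type*} [Semigroup S] (Z D : Set S)
    (hZ : ∀ y ∈ Z, ∀ z ∈ Z, y * z ∈ Z)
    (hD : ∀ d ∈ D, ∀ e ∈ D, d * e ∈ D)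
    (hZD : Z ⊆ D) :
    (∀ d e : S, d * d = d → e * e = e →
      (∃ s, domW Z D d s e) → (∃ t, domW Z D e t d) → d = e) ∧
    (∀ a e : S, e * e = e → domW Z D a e e → e * a = a ∧ a * e = a) := by
  constructor
  · rintro d e hd he ⟨s, -, -, -, -, h5, h6⟩ ⟨t, -, -, -, -, k5, k6⟩
    have h1 : d * e = d := by
      conv_lhs => rw [← h6, mul_assoc, mul_assoc, he]
      exact h6
    have h2 : d * e = e := by
      conv_lhs => rw [← k5, ← mul_assoc, hd]
      exact k5
    rw [← h1, h2]
  · rintro a e he ⟨-, -, -, -, h5, h6⟩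
    rw [← mul_assoc, he] at h5
    rw [he] at h6
    exact ⟨h5, h6⟩
end

section
/- In a structured semigroup, domination is multiplicative: if a <_{b'} b and c <_{d'} d then ac <_{d'b'} bd. -/
/-- In a structured semigroup, domination is multiplicative:
`a <_{b'} b` and `c <_{d'} d` imply `ac <_{d'b'} bd`. -/
theorem dom_mul {S : Type*} [Semigroup S] (Z D : Set S)
    (hZ : ∀ y ∈ Z, ∀ z ∈ Z, y * z ∈ Z)
    (hD : ∀ d ∈ D, ∀ e ∈ D, d * e ∈ D)
    (hZD : Z ⊆ D)
    (htri : ∀ s t n : S, t * s * n = n → n * (t * s) = n → n ∈ D →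
      s * t ∈ D → t * s ∈ D → s * n * t ∈ D)
    (hbin : ∀ s t : S, s * t ∈ Z → t * s ∈ Z → ∀ z ∈ Z, s * z * t ∈ Z)
    (hcentral : ∀ z ∈ Z, ∀ d ∈ D, z * d = d * z)
    (a b b' c d d' : S)
    (h1 : domW Z D a b' b) (h2 : domW Z D c d' d) :
    domW Z D (a * c) (d' * b') (b * d) := by
  obtain ⟨h1a, h1b, h1c, h1d, h1e, h1f⟩ := h1
  obtain ⟨h2a, h2b, h2c, h2d, h2e, h2f⟩ := h2
  -- the key middle element m = b' * a * (c * d') ∈ D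
  have hm : b' * a * (c * d') ∈ D := hD _ h1b _ h2a
  -- m * (b' * b) = m
  have hmbb : b' * a * (c * d') * (b' * b) = b' * a * (c * d') := by
    calc b' * a * (c * d') * (b' * b)
        = b' * a * ((c * d') * (b' * b)) := by simp only [mul_assoc]
      _ = b' * a * ((b' * b) * (c * d')) := by rw [← hcentral _ h1d _ h2a]
      _ = b' * (a * (b' * b)) * (c * d') := by simp only [mul_assoc]
      _ = b' * a * (c * d') := by rw [h1f]
  -- (b' * b) * m = m
  have hbbm : b' * b * (b' * a * (c * d')) = b' * a * (c * d') := by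
    rw [hcentral _ h1d _ hm, hmbb]
  -- m * (d * d') = m
  have hmdd : b' * a * (c * d') * (d * d') = b' * a * (c * d') := by
    calc b' * a * (c * d') * (d * d')
        = b' * a * (c * (d' * d) * d') := by simp only [mul_assoc]
      _ = b' * a * (c * d') := by rw [h2f]
  -- (d * d') * m = m
  have hddm : d * d' * (b' * a * (c * d')) = b' * a * (c * d') := by
    rw [hcentral _ h2c _ hm, hmdd]
  have hpart1 : a * c * (d' * b') ∈ D := by
    have h := htri b b' _ hbbm hmbb hm (hZD h1c) (hZD h1d)
    have heq : a * c * (d' * b') = b * (b' * a * (c * d')) * b' := by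
      conv_lhs => rw [← h1e]
      simp only [mul_assoc]
    rw [heq]; exact h
  have hpart2 : d' * b' * (a * c) ∈ D := by
    have h := htri d' d _ hddm hmdd hm (hZD h2d) (hZD h2c)
    have heq : d' * b' * (a * c) = d' * (b' * a * (c * d')) * d := by
      conv_rhs => rw [show d' * (b' * a * (c * d')) * d
        = d' * (b' * (a * (c * (d' * d)))) by simp only [mul_assoc]]
      rw [h2f]
      simp only [mul_assoc]
    rw [heq]; exact h
  have hpart3 : b * d * (d' * b') ∈ Z := by
    have h := hbin b b' h1c h1d _ h2c
    have heq : b * (d * d') * b' = b * d * (d' * b') := by simp only [mul_assoc]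
    rwa [heq] at h
  have hpart4 : d' * b' * (b * d) ∈ Z := by
    have h := hbin d' d h2d h2c _ h1d
    have heq : d' * (b' * b) * d = d' * b' * (b * d) := by simp only [mul_assoc]
    rwa [heq] at h
  have hpart5 : b * d * (d' * b' * (a * c)) = a * c := by
    calc b * d * (d' * b' * (a * c))
        = b * ((d * d') * (b' * a)) * c := by simp only [mul_assoc]
      _ = b * ((b' * a) * (d * d')) * c := by rw [hcentral _ h2c _ h1b]
      _ = b * (b' * a) * (d * (d' * c)) := by simp only [mul_assoc]
      _ = a * c := by rw [h1e, h2e]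
  have hpart6 : a * c * (d' * b' * (b * d)) = a * c := by
    calc a * c * (d' * b' * (b * d))
        = a * ((c * d') * (b' * b)) * d := by simp only [mul_assoc]
      _ = a * ((b' * b) * (c * d')) * d := by rw [← hcentral _ h1d _ h2a]
      _ = a * (b' * b) * (c * (d' * d)) := by simp only [mul_assoc]
      _ = a * c := by rw [h1f, h2f]
  exact ⟨hpart1, hpart2, hpart3, hpart4, hpart5, hpart6⟩
end

section
/- If the idempotents E(Z) form a commutative set, then Z-inverses of normalisers of E(Z) are unique, and the set E(Z)^{N†} of Z-inverses of normalisers of E(Z) forms an inverse semigroup whose idempotents are exactly E(Z): in particular if s is a Z-inverse of a ∈ E(Z)^N and t is a Z-inverse of b ∈ E(Z)^N, then ts is the unique Z-inverse of ab. -/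
/-- `s` is a `Z`-inverse of `a`: `asa = a`, `sas = s` and `as, sa ∈ Z`. -/
def ZInv {S : Type*} [Semigroup S] (Z : Set S) (a s : S) : Prop :=
  a * s * a = a ∧ s * a * s = s ∧ a * s ∈ Z ∧ s * a ∈ Z

/-- The idempotents of `Z`. -/
def EZ {S : Type*} [Semigroup S] (Z : Set S) : Set S := {z ∈ Z | z * z = z}

/-- `a` normalises `E(Z)`: `aE(Z) = E(Z)a`. -/
def normEZ {S : Type*} [Semigroup S] (Z : Set S) (a : S) : Prop :=
  (fun e => a * e) '' EZ Z = (fun e => e * a) '' EZ Z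

private lemma ext2 {S : Type*} [Semigroup S] {u v r : S} (h : u * v = r) (x : S) :
    u * (v * x) = r * x := by rw [← mul_assoc, h]

private lemma ext3 {S : Type*} [Semigroup S] {u v w r : S} (h : u * v * w = r) (x : S) :
    u * (v * (w * x)) = r * x := by rw [← mul_assoc, ← mul_assoc, h]

/-- `a * s` is an idempotent of `Z` when `s` is a `Z`-inverse of `a`. -/
private lemma as_mem_EZ {S : Type*} [Semigroup S] {Z : Set S} {a s : S}
    (h : ZInv Z a s) : a * s ∈ EZ Z := by
  refine ⟨h.2.2.1, ?_⟩
  rw [← mul_assoc, h.1]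

private lemma sa_mem_EZ {S : Type*} [Semigroup S] {Z : Set S} {a s : S}
    (h : ZInv Z a s) : s * a ∈ EZ Z := by
  refine ⟨h.2.2.2, ?_⟩
  rw [← mul_assoc, h.2.1]

/-- Uniqueness of `Z`-inverses when the idempotents of `Z` commute. -/
private lemma zinv_unique {S : Type*} [Semigroup S] {Z : Set S}
    (hcomm : ∀ y ∈ EZ Z, ∀ z ∈ EZ Z, y * z = z * y)
    {a s t : S} (hs : ZInv Z a s) (ht : ZInv Z a t) : s = t := by
  obtain ⟨hs1, hs2, _, _⟩ := hs
  obtain ⟨ht1, ht2, _, _⟩ := ht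
  have hc : (a * s) * (a * t) = (a * t) * (a * s) :=
    hcomm _ (as_mem_EZ ⟨hs1, hs2, ‹_›, ‹_›⟩) _ (as_mem_EZ ⟨ht1, ht2, ‹_›, ‹_›⟩)
  have hc' : (s * a) * (t * a) = (t * a) * (s * a) :=
    hcomm _ (sa_mem_EZ ⟨hs1, hs2, ‹_›, ‹_›⟩) _ (sa_mem_EZ ⟨ht1, ht2, ‹_›, ‹_›⟩)
  -- s = s * (a * t)
  have h1 : s = s * (a * t) := by
    calc s = s * (a * s) := by rw [← mul_assoc, hs2]
      _ = s * ((a * t * a) * s) := by rw [ht1]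
      _ = s * ((a * t) * (a * s)) := by rw [mul_assoc (a * t) a s]
      _ = s * ((a * s) * (a * t)) := by rw [hc]
      _ = (s * (a * s)) * (a * t) := by rw [← mul_assoc]
      _ = s * (a * t) := by rw [← mul_assoc s a s, hs2]
  -- t = (s * a) * t
  have h2 : t = (s * a) * t := by
    calc t = (t * a) * t := by rw [ht2]
      _ = (t * (a * s * a)) * t := by rw [hs1]
      _ = ((t * a) * (s * a)) * t := by simp only [← mul_assoc]
      _ = ((s * a) * (t * a)) * t := by rw [hc']
      _ = (s * a) * ((t * a) * t) := by rw [mul_assoc]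
      _ = (s * a) * t := by rw [mul_assoc t a t, ← mul_assoc t a t, ht2]
  rw [h1, ← mul_assoc, ← h2]

/-- If `E(Z)` is commutative then `Z`-inverses of normalisers of `E(Z)` are
unique, products of such elements again have `Z`-inverses given by
`{ab}† = b†a†`, and the idempotents of `E(Z)^{N†}` are exactly `E(Z)`. -/
theorem EZN_inverse_semigroup {S : Type*} [Semigroup S] (Z : Set S)
    (hZ : ∀ y ∈ Z, ∀ z ∈ Z, y * z ∈ Z)
    (hcomm : ∀ y ∈ EZ Z, ∀ z ∈ EZ Z, y * z = z * y) :
    (∀ a : S, normEZ Z a → ∀ s t : S, ZInv Z a s → ZInv Z a t → s = t) ∧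
    (∀ a b s t : S, normEZ Z a → normEZ Z b → ZInv Z a s → ZInv Z b t →
      ZInv Z (a * b) (t * s) ∧ ∀ u : S, ZInv Z (a * b) u → u = t * s) ∧
    {s : S | s * s = s ∧ ∃ a : S, normEZ Z a ∧ ZInv Z a s} = EZ Z := by
  refine ⟨fun a _ s t hs ht => zinv_unique hcomm hs ht, fun a b s t hna hnb hs ht => ?_, ?_⟩
  · obtain ⟨hs1, hs2, hs3, hs4⟩ := hs
    obtain ⟨ht1, ht2, ht3, ht4⟩ := ht
    have hbt : b * t ∈ EZ Z := as_mem_EZ ⟨ht1, ht2, ht3, ht4⟩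
    have hsa : s * a ∈ EZ Z := sa_mem_EZ ⟨hs1, hs2, hs3, hs4⟩
    have hc2 : (s * a) * (b * t) = (b * t) * (s * a) := hcomm _ hsa _ hbt
    -- flattened version of the commutation
    have hc2' : ∀ x : S, s * (a * (b * (t * x))) = b * (t * (s * (a * x))) := by
      intro x
      have := congrArg (· * x) hc2
      simpa only [mul_assoc] using this
    have hZinv : ZInv Z (a * b) (t * s) := by
      refine ⟨?_, ?_, ?_, ?_⟩
      · -- (a*b)*(t*s)*(a*b) = a*b
        have : a * (b * (t * (s * (a * b)))) = a * b := by
          rw [← hc2' b, show b * (t * b) = b from by rw [← mul_assoc, ht1], ext3 hs1 b]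
        simpa only [mul_assoc] using this
      · -- (t*s)*(a*b)*(t*s) = t*s
        have : t * (s * (a * (b * (t * s)))) = t * s := by
          rw [hc2' s, ext3 ht2 (s * (a * s)), ← mul_assoc s a s, hs2]
        simpa only [mul_assoc] using this
      · -- (a*b)*(t*s) ∈ Z
        have hmem : a * (b * t) ∈ (fun e => a * e) '' EZ Z := ⟨b * t, hbt, rfl⟩
        rw [hna] at hmem
        obtain ⟨e, he, hee⟩ := hmem
        have : (a * b) * (t * s) = e * (a * s) := by
          calc (a * b) * (t * s) = (a * (b * t)) * s := by simp only [mul_assoc]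
            _ = (e * a) * s := by rw [← hee]
            _ = e * (a * s) := mul_assoc _ _ _
        rw [this]
        exact hZ e he.1 (a * s) hs3
      · -- (t*s)*(a*b) ∈ Z
        have hmem : (s * a) * b ∈ (fun e => e * b) '' EZ Z := ⟨s * a, hsa, rfl⟩
        rw [← hnb] at hmem
        obtain ⟨f, hf, hff⟩ := hmem
        have : (t * s) * (a * b) = (t * b) * f := by
          calc (t * s) * (a * b) = t * ((s * a) * b) := by simp only [mul_assoc]
            _ = t * (b * f) := by rw [← hff]
            _ = (t * b) * f := (mul_assoc _ _ _).symm
        rw [this]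
        exact hZ (t * b) ht4 f hf.1
    exact ⟨hZinv, fun u hu => zinv_unique hcomm hu hZinv⟩
  · ext s
    constructor
    · rintro ⟨hss, a, _, hs1, hs2, hs3, hs4⟩
      refine ⟨?_, hss⟩
      have he : a * s ∈ EZ Z := as_mem_EZ ⟨hs1, hs2, hs3, hs4⟩
      have hf : s * a ∈ EZ Z := sa_mem_EZ ⟨hs1, hs2, hs3, hs4⟩
      have hc : (a * s) * (s * a) = (s * a) * (a * s) := hcomm _ he _ hf
      have hss2 : ∀ x : S, s * (s * x) = s * x := ext2 hss
      have h1 : s * (a * s) = s := by rw [← mul_assoc, hs2]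
      have key : s = (s * a) * (a * s) := by
        calc s = s * s := hss.symm
          _ = (s * (a * s)) * ((s * a) * s) := by rw [h1, hs2]
          _ = (s * ((a * s) * (s * a))) * s := by simp only [mul_assoc]
          _ = (s * ((s * a) * (a * s))) * s := by rw [hc]
          _ = (s * a) * (a * s) := by
              simp only [mul_assoc, hss2, hss]
      rw [key]
      exact hZ (s * a) hs4 (a * s) hs3
    · rintro ⟨hsZ, hss⟩
      refine ⟨hss, s, ?_, ?_⟩
      · -- normEZ Z s
        unfold normEZ
        ext x
        constructor
        · rintro ⟨f, hf, rfl⟩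
          exact ⟨f, hf, (hcomm s ⟨hsZ, hss⟩ f hf).symm⟩
        · rintro ⟨f, hf, rfl⟩
          exact ⟨f, hf, hcomm s ⟨hsZ, hss⟩ f hf⟩
      · refine ⟨?_, ?_, ?_, ?_⟩ <;> rw [hss] <;> first | exact hsZ | rw [hss]
end

section
/- The set of Z-invertible elements is exactly the set of elements on which domination is reflexive, and it is closed under restriction: S† = {a ∈ S : a < a} and any a ≤ r with r ∈ S† satisfies a ∈ S†. -/
/-- The witnessed domination relation `a <_s b` (with `D = Z`):
`as, sa, bs, sb ∈ Z` and `bsa = a = asb`. -/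
def domZ {S : Type*} [Semigroup S] (Z : Set S) (a s b : S) : Prop :=
  a * s ∈ Z ∧ s * a ∈ Z ∧ b * s ∈ Z ∧ s * b ∈ Z ∧ b * (s * a) = a ∧ a * (s * b) = a

/-- From `asa = a` with `as, sa ∈ Z`, the element `sas` is a `Z`-inverse of `a`. -/
lemma zinv_of_regular {S : Type*} [Semigroup S] (Z : Set S)
    (hZ : ∀ y ∈ Z, ∀ z ∈ Z, y * z ∈ Z) {a s : S}
    (h1 : a * s * a = a) (h2 : a * s ∈ Z) (h3 : s * a ∈ Z) :
    ZInv Z a (s * a * s) := by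
  refine ⟨?_, ?_, ?_, ?_⟩
  · calc a * (s * a * s) * a = (a * s * a) * (s * a) := by simp [mul_assoc]
    _ = a * (s * a) := by rw [h1]
    _ = a := by rw [← mul_assoc, h1]
  · calc s * a * s * a * (s * a * s) = s * (a * s * a) * (s * a * s) := by
          simp [mul_assoc]
      _ = s * a * (s * a * s) := by rw [h1]
      _ = s * (a * s * a) * s := by simp [mul_assoc]
      _ = s * a * s := by rw [h1]
  · have : a * (s * a * s) = (a * s) * (a * s) := by simp [mul_assoc]
    rw [this]; exact hZ _ h2 _ h2
  · have : s * a * s * a = (s * a) * (s * a) := by simp [mul_assoc]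
    rw [this]; exact hZ _ h3 _ h3

/-- The `Z`-invertible elements are exactly the elements on which domination
is reflexive, and any restriction of a `Z`-invertible element is again
`Z`-invertible. -/
theorem Zinvertibles_eq_reflexive {S : Type*} [Semigroup S] (Z : Set S)
    (hZ : ∀ y ∈ Z, ∀ z ∈ Z, y * z ∈ Z) :
    ({a : S | ∃ s, ZInv Z a s} = {a : S | ∃ s, domZ Z a s a}) ∧
    (∀ a r : S, restr Z a r → (∃ s, ZInv Z r s) → ∃ s, ZInv Z a s) := by
  constructor
  · ext a
    simp only [Set.mem_setOf_eq]
    constructor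
    · rintro ⟨s, h1, h2, h3, h4⟩
      exact ⟨s, h3, h4, h3, h4, by rw [← mul_assoc, h1], by rw [← mul_assoc]; exact h1⟩
    · rintro ⟨s, h1, h2, h3, h4, h5, h6⟩
      exact ⟨s * a * s, zinv_of_regular Z hZ (by rw [mul_assoc]; exact h5) h1 h2⟩
  · rintro a r ⟨y, hy, z, hz, hyr, hya, haz, hrz⟩ ⟨s, h1, h2, h3, h4⟩
    have key : a * s * a = a := by
      calc a * s * a = y * r * s * (r * z) := by rw [hyr, hrz]
        _ = y * (r * s * r) * z := by simp [mul_assoc]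
        _ = y * r * z := by rw [h1]
        _ = a * z := by rw [hyr]
        _ = a := haz
    have has : a * s ∈ Z := by
      have : a * s = y * (r * s) := by rw [← hyr, mul_assoc]
      rw [this]; exact hZ _ hy _ h3
    have hsa : s * a ∈ Z := by
      have : s * a = (s * r) * z := by rw [← hrz, mul_assoc]
      rw [this]; exact hZ _ h4 _ hz
    exact ⟨s * a * s, zinv_of_regular Z hZ key has hsa⟩
end

section
/- If Z is commutative then every Z-invertible element a is bisupported: for any s with a <_s a, the element sa is the minimum of {z ∈ Z : az = a} and as is the minimum of {z ∈ Z : za = a} with respect to the restriction relation. -/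
/-- If `Z` is commutative then every `Z`-invertible element is bisupported:
for `a <_s a`, `sa` is the minimum of `{z ∈ Z : az = a}` and `as` is the
minimum of `{z ∈ Z : za = a}` w.r.t. restriction. -/
theorem Zinvertible_bisupported {S : Type*} [Semigroup S] (Z : Set S)
    (hZ : ∀ y ∈ Z, ∀ z ∈ Z, y * z ∈ Z)
    (hcomm : ∀ y ∈ Z, ∀ z ∈ Z, y * z = z * y)
    (a s : S) (has : a * s ∈ Z) (hsa : s * a ∈ Z) (hasa : a * (s * a) = a) :
    (s * a ∈ Z ∧ a * (s * a) = a ∧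
      ∀ z ∈ Z, a * z = a → restr Z (s * a) z) ∧
    (a * s ∈ Z ∧ (a * s) * a = a ∧
      ∀ z ∈ Z, z * a = a → restr Z (a * s) z) := by
  have hasa' : (a * s) * a = a := by rw [mul_assoc]; exact hasa
  have hidL : (s * a) * (s * a) = s * a := by
    rw [mul_assoc, hasa]
  have hidR : (a * s) * (a * s) = a * s := by
    rw [← mul_assoc, hasa']
  refine ⟨⟨hsa, hasa, fun z hz haz => ?_⟩, ⟨has, hasa', fun z hz hza => ?_⟩⟩
  · refine ⟨s * a, hsa, s * a, hsa, ?_, hidL, hidL, ?_⟩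
    · rw [mul_assoc, haz]
    · rw [hcomm z hz (s * a) hsa, mul_assoc, haz]
  · refine ⟨a * s, has, a * s, has, ?_, hidR, hidR, ?_⟩
    · rw [hcomm (a * s) has z hz, ← mul_assoc, hza]
    · rw [← mul_assoc, hza]
end

section
/- If Z is bistable with respect to an expectation Φ, then Φ is compatible with domination: a <_{b'} b implies Φ(a) <_{b'} Φ(b). -/
/-- If `Z` is bistable w.r.t. an expectation `Φ`, then `Φ` is compatible with
domination: `a <_{b'} b` implies `Φ(a) <_{b'} Φ(b)`, where `a <_{b'} b` means
`ab', b'a ∈ ran(Φ)`, `bb', b'b ∈ Z` and `bb'a = a = ab'b`. -/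
theorem expectation_dom_compatible {S : Type*} [Semigroup S]
    (Φ : S → S) (Z : Set S)
    (hidem : ∀ a : S, Φ (Φ a) = Φ a)
    (hhom : ∀ a b : S, Φ a * Φ b = Φ (Φ a * b) ∧ Φ a * Φ b = Φ (a * Φ b))
    (hZ : ∀ y ∈ Z, ∀ z ∈ Z, y * z ∈ Z)
    (hZr : Z ⊆ Set.range Φ)
    (hbi : ∀ s t : S, s * t ∈ Z → Φ s * t ∈ Z ∧ s * Φ t ∈ Z)
    (a b' b : S)
    (h1 : a * b' ∈ Set.range Φ) (h2 : b' * a ∈ Set.range Φ)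
    (h3 : b * b' ∈ Z) (h4 : b' * b ∈ Z)
    (h5 : b * (b' * a) = a) (h6 : a * (b' * b) = a) :
    Φ a * b' ∈ Set.range Φ ∧ b' * Φ a ∈ Set.range Φ ∧
    Φ b * b' ∈ Z ∧ b' * Φ b ∈ Z ∧
    Φ b * (b' * Φ a) = Φ a ∧ Φ a * (b' * Φ b) = Φ a := by
  -- Φ fixes its range
  have fix : ∀ u ∈ Set.range Φ, Φ u = u := by
    rintro u ⟨x, rfl⟩; exact hidem x
  -- conclusions 3 and 4 by bistability
  have g3 : Φ b * b' ∈ Z := (hbi b b' h3).1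
  have g4 : b' * Φ b ∈ Z := (hbi b' b h4).2
  -- eq1 : Φ b * (b' * a) = Φ a
  have eq1 : Φ b * (b' * a) = Φ a := by
    have := (hhom b (b' * a)).2
    rw [fix _ h2] at this
    rw [this, h5]
  -- eq2 : (a * b') * Φ b = Φ a
  have eq2 : a * b' * Φ b = Φ a := by
    have h' := (hhom (a * b') b).1
    rw [fix _ h1] at h'
    rw [h', mul_assoc, h6]
  -- conclusion 1 : Φ a * b' ∈ ran Φ
  have g1 : Φ a * b' ∈ Set.range Φ := by
    have : Φ a * b' = Φ b * b' * (a * b') := by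
      rw [← eq1]; simp only [mul_assoc]
    rw [this, ← fix _ (hZr g3), ← fix _ h1, (hhom _ _).1]
    exact Set.mem_range_self _
  -- conclusion 2 : b' * Φ a ∈ ran Φ
  have g2 : b' * Φ a ∈ Set.range Φ := by
    have : b' * Φ a = (b' * a) * (b' * Φ b) := by
      rw [← eq2]; simp only [mul_assoc]
    rw [this, ← fix _ (hZr g4), ← fix _ h2, (hhom _ _).1]
    exact Set.mem_range_self _
  -- conclusion 5 : Φ b * (b' * Φ a) = Φ a
  have g5 : Φ b * (b' * Φ a) = Φ a := by
    have h' := (hhom (Φ b * b') a).1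
    rw [fix _ (hZr g3)] at h'
    rw [← mul_assoc, h', mul_assoc, eq1, hidem]
  -- conclusion 6 : Φ a * (b' * Φ b) = Φ a
  have g6 : Φ a * (b' * Φ b) = Φ a := by
    have h' := (hhom a (b' * Φ b)).2
    rw [fix _ (hZr g4)] at h'
    rw [h', ← mul_assoc, eq2, hidem]
  exact ⟨g1, g2, g3, g4, g5, g6⟩
end

section
/- If Z is bistable then the expectation Φ is quasi-Cartan on dominated elements: for every a ∈ S such that a <_{s'} s for some s, s' ∈ S, one has Φ(a) ≤ a. -/
/-- If `Z` is bistable then the expectation `Φ` is quasi-Cartan on dominated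
elements: if `a <_{s'} s` for some `s, s'` then `Φ(a) ≤ a`. -/
theorem quasiCartan_on_dominated {S : Type*} [Semigroup S]
    (Φ : S → S) (Z : Set S)
    (hidem : ∀ a : S, Φ (Φ a) = Φ a)
    (hhom : ∀ a b : S, Φ a * Φ b = Φ (Φ a * b) ∧ Φ a * Φ b = Φ (a * Φ b))
    (hZ : ∀ y ∈ Z, ∀ z ∈ Z, y * z ∈ Z)
    (hZr : Z ⊆ Set.range Φ)
    (hbi : ∀ s t : S, s * t ∈ Z → Φ s * t ∈ Z ∧ s * Φ t ∈ Z)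
    (a s s' : S)
    (h1 : a * s' ∈ Set.range Φ) (h2 : s' * a ∈ Set.range Φ)
    (h3 : s * s' ∈ Z) (h4 : s' * s ∈ Z)
    (h5 : s * (s' * a) = a) (h6 : a * (s' * s) = a) :
    restr Z (Φ a) a := by
  -- elements of `Set.range Φ` are fixed by `Φ`
  have hfix : ∀ x : S, x ∈ Set.range Φ → Φ x = x := by
    rintro x ⟨w, rfl⟩; exact hidem w
  have hsa : Φ (s' * a) = s' * a := hfix _ h2
  have has : Φ (a * s') = a * s' := hfix _ h1
  -- witnesses
  refine ⟨Φ s * s', (hbi s s' h3).1, s' * Φ s, (hbi s' s h4).2, ?_, ?_, ?_, ?_⟩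
  -- y * a = Φ a
  case _ =>
    calc Φ s * s' * a = Φ s * Φ (s' * a) := by rw [hsa, mul_assoc]
    _ = Φ (s * Φ (s' * a)) := (hhom s (s' * a)).2
    _ = Φ a := by rw [hsa, h5]
  -- y * Φ a = Φ a
  case _ =>
    have hy : Φ (Φ s * s') = Φ s * s' := hfix _ (hZr (hbi s s' h3).1)
    calc Φ s * s' * Φ a = Φ (Φ s * s') * Φ a := by rw [hy]
    _ = Φ (Φ (Φ s * s') * a) := (hhom _ a).1
    _ = Φ (Φ s * s' * a) := by rw [hy]
    _ = Φ (Φ s * Φ (s' * a)) := by rw [hsa, mul_assoc]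
    _ = Φ (Φ (s * Φ (s' * a))) := by rw [(hhom s (s' * a)).2]
    _ = Φ a := by rw [hsa, h5, hidem]
  -- Φ a * z = Φ a
  case _ =>
    have hz : Φ (s' * Φ s) = s' * Φ s := hfix _ (hZr (hbi s' s h4).2)
    calc Φ a * (s' * Φ s) = Φ a * Φ (s' * Φ s) := by rw [hz]
    _ = Φ (a * Φ (s' * Φ s)) := (hhom a _).2
    _ = Φ (a * (s' * Φ s)) := by rw [hz]
    _ = Φ (Φ (a * s') * Φ s) := by rw [has, mul_assoc]
    _ = Φ (Φ (Φ (a * s') * s)) := by rw [(hhom (a * s') s).1]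
    _ = Φ (Φ (a * (s' * s))) := by rw [has, mul_assoc]
    _ = Φ a := by rw [h6, hidem]
  -- a * z = Φ a
  case _ =>
    calc a * (s' * Φ s) = Φ (a * s') * Φ s := by rw [has, mul_assoc]
    _ = Φ (Φ (a * s') * s) := (hhom (a * s') s).1
    _ = Φ (a * (s' * s)) := by rw [has, mul_assoc]
    _ = Φ a := by rw [h6]
end
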